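/- (Fagin–Kumar–Sivakumar) Let (X,d) be a b-metric space. Then d is Lipschitz equivalent to a metric — i.e. there exist a metric ρ on X and constants c₁, c₂ > 0 such that c₁·ρ(x,y) ≤ d(x,y) ≤ c₂·ρ(x,y) for all x,y ∈ X — if and only if d satisfies the s-relaxed polygonal inequality for some s ≥ 1. -/

import Mathlib

/-!
If `c₁ ρ ≤ d ≤ c₂ ρ` for a metric `ρ`, the triangle inequality for `ρ` along a chain gives the
polygonal inequality for `d` with constant `c₂ / c₁`. Conversely, the chain distance
`ρ x y = inf {d x₀ x₁ + ⋯ + d xₙ₋₁ xₙ | x₀ = x, xₙ = y}` is a metric: it is symmetric because chains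
can be reversed and satisfies the triangle inequality because chains can be concatenated. It is at
most `d` (one-step chains), and the `s`-relaxed polygonal inequality says precisely that
`d ≤ s ρ`.
-/

open Finset Pointwise

section Chains

variable {X : Type*} (d : X → X → ℝ)

def chainLength (f : ℕ → X) (n : ℕ) : ℝ :=
  ∑ i ∈ range n, d (f i) (f (i + 1))

def RelaxedPolygonal (s : ℝ) : Prop :=
  ∀ n, 1 ≤ n → ∀ f : ℕ → X, d (f 0) (f n) ≤ s * chainLength d f n

def chainLengths (x y : X) : Set ℝ :=
  {t | ∃ n, 1 ≤ n ∧ ∃ f : ℕ → X, f 0 = x ∧ f n = y ∧ chainLength d f n = t}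

noncomputable def chainDist (x y : X) : ℝ :=
  sInf (chainLengths d x y)

variable {d}

theorem chainLength_nonneg (hd : ∀ x y, 0 ≤ d x y) (f : ℕ → X) (n : ℕ) :
    0 ≤ chainLength d f n :=
  sum_nonneg fun _ _ => hd _ _

theorem le_chainLength_of_triangle (hself : ∀ x, d x x = 0)
    (htri : ∀ x y z, d x y ≤ d x z + d z y) (f : ℕ → X) (n : ℕ) :
    d (f 0) (f n) ≤ chainLength d f n := by
  induction n with
  | zero => simp [chainLength, hself]
  | succ n ih =>
    unfold chainLength at ih ⊢
    rw [sum_range_succ]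
    linarith [htri (f 0) (f (n + 1)) (f n)]

theorem chainLength_le_div_of_mul_le {ρ : X → X → ℝ} {c : ℝ} (hc : 0 < c)
    (hle : ∀ x y, c * ρ x y ≤ d x y) (f : ℕ → X) (n : ℕ) :
    chainLength ρ f n ≤ chainLength d f n / c := by
  rw [le_div_iff₀ hc, chainLength, chainLength, sum_mul]
  exact sum_le_sum fun i _ => by linarith [hle (f i) (f (i + 1))]

theorem chainLength_reverse (hsymm : ∀ x y, d x y = d y x) (f : ℕ → X) (n : ℕ) :
    chainLength d (fun i => f (n - i)) n = chainLength d f n := by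
  rw [chainLength, chainLength, ← sum_range_reflect]
  refine sum_congr rfl fun i hi => ?_
  have hi : i < n := mem_range.1 hi
  rw [hsymm, show n - (n - 1 - i) = i + 1 by omega, show n - (n - 1 - i + 1) = i by omega]

theorem chainLength_append {f g : ℕ → X} {n : ℕ} (hfg : f n = g 0) (m : ℕ) :
    chainLength d (fun i => if i < n then f i else g (i - n)) (n + m) =
      chainLength d f n + chainLength d g m := by
  rw [chainLength, sum_range_add]
  congr 1
  · refine sum_congr rfl fun i hi => ?_
    have hi : i < n := mem_range.1 hi
    by_cases hlast : i + 1 < n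
    · simp [hi, hlast]
    · simp [hi, show i + 1 = n by omega, hfg]
  · refine sum_congr rfl fun i _ => ?_
    simp [show ¬n + i + 1 < n by omega, show n + i + 1 - n = i + 1 by omega]

theorem RelaxedPolygonal.of_le_of_mul_le {ρ : X → X → ℝ} {c₁ c₂ : ℝ} (hc₁ : 0 < c₁)
    (hc₂ : 0 ≤ c₂) (hself : ∀ x, ρ x x = 0) (htri : ∀ x y z, ρ x y ≤ ρ x z + ρ z y)
    (hlower : ∀ x y, c₁ * ρ x y ≤ d x y) (hupper : ∀ x y, d x y ≤ c₂ * ρ x y) :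
    RelaxedPolygonal d (c₂ / c₁) := by
  intro n _ f
  calc d (f 0) (f n) ≤ c₂ * ρ (f 0) (f n) := hupper _ _
    _ ≤ c₂ * (chainLength d f n / c₁) := by
      gcongr
      exact (le_chainLength_of_triangle hself htri f n).trans
        (chainLength_le_div_of_mul_le hc₁ hlower f n)
    _ = c₂ / c₁ * chainLength d f n := by ring

theorem RelaxedPolygonal.mono {s s' : ℝ} (h : RelaxedPolygonal d s) (hss' : s ≤ s')
    (hd : ∀ x y, 0 ≤ d x y) : RelaxedPolygonal d s' := fun n hn f =>
  (h n hn f).trans (mul_le_mul_of_nonneg_right hss' (chainLength_nonneg hd f n))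

theorem RelaxedPolygonal.le_mul_of_mem_chainLengths {s : ℝ} (h : RelaxedPolygonal d s)
    {x y : X} {t : ℝ} (ht : t ∈ chainLengths d x y) : d x y ≤ s * t := by
  obtain ⟨n, hn, f, rfl, rfl, rfl⟩ := ht
  exact h n hn f

theorem mem_chainLengths_self (x y : X) : d x y ∈ chainLengths d x y :=
  ⟨1, le_rfl, fun i => if i = 0 then x else y, rfl, rfl, by simp [chainLength]⟩

theorem chainLengths_comm (hsymm : ∀ x y, d x y = d y x) (x y : X) :
    chainLengths d x y = chainLengths d y x := by
  suffices ∀ x y, chainLengths d x y ⊆ chainLengths d y x from (this x y).antisymm (this y x)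
  rintro x y _ ⟨n, hn, f, rfl, rfl, rfl⟩
  exact ⟨n, hn, fun i => f (n - i), by simp, by simp, chainLength_reverse hsymm f n⟩

theorem chainLengths_add_subset (x y z : X) :
    chainLengths d x z + chainLengths d z y ⊆ chainLengths d x y := by
  rintro _ ⟨_, ⟨n, hn, f, rfl, hfn, rfl⟩, _, ⟨m, hm, g, rfl, rfl, rfl⟩, rfl⟩
  refine ⟨n + m, by omega, _, by simp [show 0 < n by omega], by simp, chainLength_append hfn m⟩

theorem nonneg_of_mem_chainLengths (hd : ∀ x y, 0 ≤ d x y) {x y : X} {t : ℝ}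
    (ht : t ∈ chainLengths d x y) : 0 ≤ t := by
  obtain ⟨n, -, f, -, -, rfl⟩ := ht
  exact chainLength_nonneg hd f n

theorem chainLengths_nonempty (x y : X) : (chainLengths d x y).Nonempty :=
  ⟨_, mem_chainLengths_self x y⟩

theorem bddBelow_chainLengths (hd : ∀ x y, 0 ≤ d x y) (x y : X) :
    BddBelow (chainLengths d x y) :=
  ⟨0, fun _ => nonneg_of_mem_chainLengths hd⟩

theorem chainDist_nonneg (hd : ∀ x y, 0 ≤ d x y) (x y : X) : 0 ≤ chainDist d x y :=
  le_csInf (chainLengths_nonempty x y) fun _ => nonneg_of_mem_chainLengths hd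

theorem chainDist_le (hd : ∀ x y, 0 ≤ d x y) (x y : X) : chainDist d x y ≤ d x y :=
  csInf_le (bddBelow_chainLengths hd x y) (mem_chainLengths_self x y)

theorem chainDist_comm (hsymm : ∀ x y, d x y = d y x) (x y : X) :
    chainDist d x y = chainDist d y x := by
  rw [chainDist, chainLengths_comm hsymm]; rfl

theorem chainDist_triangle (hd : ∀ x y, 0 ≤ d x y) (x y z : X) :
    chainDist d x y ≤ chainDist d x z + chainDist d z y := by
  rw [chainDist, chainDist, chainDist,
    ← csInf_add (chainLengths_nonempty x z) (bddBelow_chainLengths hd x z)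
      (chainLengths_nonempty z y) (bddBelow_chainLengths hd z y)]
  exact csInf_le_csInf (bddBelow_chainLengths hd x y)
    (Set.add_nonempty.2 ⟨chainLengths_nonempty x z, chainLengths_nonempty z y⟩)
    (chainLengths_add_subset x y z)

theorem RelaxedPolygonal.le_mul_chainDist {s : ℝ} (h : RelaxedPolygonal d s) (hs : 0 < s)
    (x y : X) : d x y ≤ s * chainDist d x y := by
  rw [← div_le_iff₀' hs]
  exact le_csInf (chainLengths_nonempty x y) fun t ht =>
    (div_le_iff₀' hs).2 (h.le_mul_of_mem_chainLengths ht)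

theorem chainDist_eq_zero_iff {s : ℝ} (h : RelaxedPolygonal d s) (hs : 0 < s)
    (hd : ∀ x y, 0 ≤ d x y) (heq : ∀ x y, d x y = 0 ↔ x = y) (x y : X) :
    chainDist d x y = 0 ↔ x = y := by
  refine ⟨fun h0 => (heq x y).1 ?_, ?_⟩
  · exact le_antisymm (by simpa [h0] using h.le_mul_chainDist hs x y) (hd x y)
  · rintro rfl
    exact le_antisymm ((chainDist_le hd x x).trans_eq ((heq x x).2 rfl)) (chainDist_nonneg hd x x)

end Chains

theorem lipschitz_equiv_metric_iff_relaxed_polygonal_general {X : Type*}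
    (d : X → X → ℝ)
    (hnonneg : ∀ x y, 0 ≤ d x y)
    (heq : ∀ x y, d x y = 0 ↔ x = y)
    (hsymm : ∀ x y, d x y = d y x) :
    (∃ ρ : X → X → ℝ,
      (∀ x y, 0 ≤ ρ x y) ∧
      (∀ x y, ρ x y = 0 ↔ x = y) ∧
      (∀ x y, ρ x y = ρ y x) ∧
      (∀ x y z, ρ x y ≤ ρ x z + ρ z y) ∧
      (∃ c₁ > (0:ℝ), ∃ c₂ > (0:ℝ), ∀ x y, c₁ * ρ x y ≤ d x y ∧ d x y ≤ c₂ * ρ x y))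
    ↔
    (∃ s : ℝ, 1 ≤ s ∧ ∀ (n : ℕ), 1 ≤ n → ∀ x : ℕ → X,
      d (x 0) (x n) ≤ s * ∑ i ∈ Finset.range n, d (x i) (x (i + 1))) := by
  constructor
  · rintro ⟨ρ, -, hρeq, -, hρtri, c₁, hc₁, c₂, hc₂, hle⟩
    have hpoly : RelaxedPolygonal d (c₂ / c₁) :=
      .of_le_of_mul_le hc₁ hc₂.le (fun x => (hρeq x x).2 rfl) hρtri (fun x y => (hle x y).1)
        (fun x y => (hle x y).2)
    exact ⟨_, le_max_left 1 _, hpoly.mono (le_max_right _ _) hnonneg⟩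
  · rintro ⟨s, hs, hpoly : RelaxedPolygonal d s⟩
    have hs₀ : 0 < s := one_pos.trans_le hs
    exact ⟨chainDist d, chainDist_nonneg hnonneg, chainDist_eq_zero_iff hpoly hs₀ hnonneg heq,
      chainDist_comm hsymm, chainDist_triangle hnonneg, 1, one_pos, s, hs₀,
      fun x y => ⟨by simpa using chainDist_le hnonneg x y, hpoly.le_mul_chainDist hs₀ x y⟩⟩

/-- **Fagin–Kumar–Sivakumar.** A b-metric `d` is Lipschitz equivalent to a metric
iff it satisfies the `s`-relaxed polygonal inequality for some `s ≥ 1`. -/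
theorem lipschitz_equiv_metric_iff_relaxed_polygonal {X : Type*} [Nonempty X]
    (d : X → X → ℝ) (s₀ : ℝ) (hs₀ : 1 ≤ s₀)
    (hnonneg : ∀ x y, 0 ≤ d x y)
    (heq : ∀ x y, d x y = 0 ↔ x = y)
    (hsymm : ∀ x y, d x y = d y x)
    (htri : ∀ x y z, d x y ≤ s₀ * (d x z + d z y)) :
    (∃ ρ : X → X → ℝ,
      (∀ x y, 0 ≤ ρ x y) ∧
      (∀ x y, ρ x y = 0 ↔ x = y) ∧
      (∀ x y, ρ x y = ρ y x) ∧
      (∀ x y z, ρ x y ≤ ρ x z + ρ z y) ∧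
      (∃ c₁ > (0:ℝ), ∃ c₂ > (0:ℝ), ∀ x y, c₁ * ρ x y ≤ d x y ∧ d x y ≤ c₂ * ρ x y))
    ↔
    (∃ s : ℝ, 1 ≤ s ∧ ∀ (n : ℕ), 1 ≤ n → ∀ x : ℕ → X,
      d (x 0) (x n) ≤ s * ∑ i ∈ Finset.range n, d (x i) (x (i + 1))) :=
  lipschitz_equiv_metric_iff_relaxed_polygonal_general d hnonneg heq hsymm
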